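/- Let X and Y be coinfinite primitive recursive subsets of ℕ with 0 ∈ X ∩ Y. Define Z₀ ⊆ ℕ by: 0 ∈ Z₀, and for all s, s+1 ∉ Z₀ iff max(#(0^X)[s+1], #(0^Y)[s+1]) > max(#(0^X)[s], #(0^Y)[s]). Then Z₀ is primitive recursive, coinfinite, and for all s, #(0^{Z₀})[s] = max(#(0^X)[s], #(0^Y)[s]). -/

import Mathlib

/-- The equivalence relation `R_X`: `x R_X y` iff both in `X` or `x = y`. -/
def REq (X : Set ℕ) (x y : ℕ) : Prop := (x ∈ X ∧ y ∈ X) ∨ x = y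

/-- Primitive recursive reducibility between binary relations on ℕ. -/
def PrRed (R S : ℕ → ℕ → Prop) : Prop :=
  ∃ f : ℕ → ℕ, Primrec f ∧ ∀ x y, R x y ↔ S (f x) (f y)

/-- pr-bireducibility. -/
def PrEquiv (R S : ℕ → ℕ → Prop) : Prop := PrRed R S ∧ PrRed S R

/-- `X` is a primitive recursive set. -/
def PRSet (X : Set ℕ) : Prop :=
  ∃ f : ℕ → Bool, Primrec f ∧ ∀ n, n ∈ X ↔ f n = true

/-- `#(0^X)[s]`: the number of elements of the complement of `X` that are `≤ s`. -/
noncomputable def zc (X : Set ℕ) (s : ℕ) : ℕ := {k | k ≤ s ∧ k ∉ X}.ncard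

/-! `M s := max (zc X s) (zc Y s)` starts at `0` and grows by at most one per step, because
each of the two counts does; `Z₀` is the set of points where `M` does not grow, so its
counting function is `M` itself. Counting functions of primitive recursive sets are primitive
recursive, and conversely a set containing `0` is decided by comparing its counting function at
`n` and `n - 1`. Finally `zc X ≤ M`, and `zc X` is unbounded since `Xᶜ` is infinite. -/

theorem PrimrecPred.count {p : ℕ → Prop} [DecidablePred p] (hp : PrimrecPred p) :
    Primrec (Nat.count p) := by
  have hrec : Nat.count p = Nat.rec 0 fun n c => c + if p n then 1 else 0 :=
    funext fun n => by induction n <;> simp_all [Nat.count_succ]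
  rw [hrec]
  exact Primrec.nat_rec₁ 0 <| Primrec.nat_add.comp₂ Primrec₂.right <|
    (Primrec.ite (hp.comp Primrec.fst) (Primrec.const 1) (Primrec.const 0)).to₂

open scoped Classical in
theorem zc_eq_count (X : Set ℕ) (s : ℕ) : zc X s = Nat.count (· ∉ X) (s + 1) := by
  rw [Nat.count_eq_card_filter_range, zc, ← Set.ncard_coe_finset]
  congr 1
  ext k
  simp

theorem zc_succ_of_mem {X : Set ℕ} {s : ℕ} (h : s + 1 ∈ X) : zc X (s + 1) = zc X s := by
  classical
  rw [zc_eq_count, zc_eq_count, Nat.count_succ _ (s + 1), if_neg (not_not.2 h), add_zero]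

theorem zc_succ_of_notMem {X : Set ℕ} {s : ℕ} (h : s + 1 ∉ X) :
    zc X (s + 1) = zc X s + 1 := by
  classical
  rw [zc_eq_count, zc_eq_count, Nat.count_succ _ (s + 1), if_pos h]

theorem zc_zero_of_mem {X : Set ℕ} (h : 0 ∈ X) : zc X 0 = 0 := by
  classical
  simp [zc_eq_count, Nat.count_one, h]

theorem zc_le_zc_succ (X : Set ℕ) (s : ℕ) : zc X s ≤ zc X (s + 1) := by
  by_cases h : s + 1 ∈ X
  · rw [zc_succ_of_mem h]
  · rw [zc_succ_of_notMem h]; omega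

theorem zc_succ_le (X : Set ℕ) (s : ℕ) : zc X (s + 1) ≤ zc X s + 1 := by
  by_cases h : s + 1 ∈ X
  · rw [zc_succ_of_mem h]; omega
  · rw [zc_succ_of_notMem h]

theorem zc_nth_of_infinite {X : Set ℕ} (hX : Xᶜ.Infinite) (n : ℕ) :
    zc X (Nat.nth (· ∉ X) n) = n + 1 := by
  classical
  rw [zc_eq_count, Nat.count_succ, Nat.count_nth_of_infinite hX,
    if_pos (Nat.nth_mem_of_infinite hX n)]

theorem zc_le_ncard_compl {Z : Set ℕ} (hZ : Zᶜ.Finite) (s : ℕ) : zc Z s ≤ Zᶜ.ncard :=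
  Set.ncard_le_ncard (fun _ hk => hk.2) hZ

theorem Set.Infinite.compl_of_zc_le {X Z : Set ℕ} (hX : Xᶜ.Infinite) (h : ∀ s, zc X s ≤ zc Z s) :
    Zᶜ.Infinite := by
  intro hZ
  have := (h _).trans (zc_le_ncard_compl hZ (Nat.nth (· ∉ X) Zᶜ.ncard))
  rw [zc_nth_of_infinite hX] at this
  omega

theorem zc_eq_of_step {Z : Set ℕ} {c : ℕ → ℕ} (hc0 : c 0 = 0) (hmono : ∀ s, c s ≤ c (s + 1))
    (hstep : ∀ s, c (s + 1) ≤ c s + 1) (hZ0 : 0 ∈ Z) (hZ : ∀ s, s + 1 ∉ Z ↔ c s < c (s + 1)) :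
    zc Z = c := by
  funext s
  induction s with
  | zero => rw [zc_zero_of_mem hZ0, hc0]
  | succ s ih =>
    have := hmono s; have := hstep s
    by_cases h : s + 1 ∈ Z
    · have : ¬c s < c (s + 1) := fun hlt => (hZ s).2 hlt h
      rw [zc_succ_of_mem h, ih]; omega
    · have := (hZ s).1 h
      rw [zc_succ_of_notMem h, ih]; omega

theorem PRSet.primrec_zc {X : Set ℕ} (hX : PRSet X) : Primrec (zc X) := by
  classical
  obtain ⟨f, hf, hfX⟩ := hX
  have hnot : PrimrecPred (· ∉ X) :=
    primrecPred_iff_primrec_decide.2 <| (Primrec.not.comp hf).of_eq fun n => by simp [hfX]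
  exact (hnot.count.comp Primrec.succ).of_eq fun s => (zc_eq_count X s).symm

theorem PRSet.of_primrec_zc {Z : Set ℕ} (hZ0 : 0 ∈ Z) (h : Primrec (zc Z)) : PRSet Z := by
  refine ⟨fun n => decide (zc Z n = zc Z (n - 1)),
    (Primrec.eq.comp h (h.comp Primrec.pred)).decide, fun n => ?_⟩
  rcases n with _ | s
  · simpa using hZ0
  · by_cases h : s + 1 ∈ Z
    · simp [zc_succ_of_mem h, h]
    · simp [zc_succ_of_notMem h, h]

theorem stmt_7_general (X Y Z₀ : Set ℕ) (hX : PRSet X) (hY : PRSet Y)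
    (hXc : Xᶜ.Infinite) (hX0 : 0 ∈ X) (hY0 : 0 ∈ Y)
    (hZ0 : 0 ∈ Z₀)
    (hZ : ∀ s, (s + 1 ∉ Z₀ ↔
      max (zc X (s+1)) (zc Y (s+1)) > max (zc X s) (zc Y s))) :
    PRSet Z₀ ∧ Z₀ᶜ.Infinite ∧ ∀ s, zc Z₀ s = max (zc X s) (zc Y s) := by
  have hstep (s : ℕ) : max (zc X (s + 1)) (zc Y (s + 1)) ≤ max (zc X s) (zc Y s) + 1 := by
    have := zc_succ_le X s; have := zc_succ_le Y s; omega
  have hZ₀ : zc Z₀ = fun s => max (zc X s) (zc Y s) :=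
    zc_eq_of_step (by simp [zc_zero_of_mem hX0, zc_zero_of_mem hY0])
      (fun s => max_le_max (zc_le_zc_succ X s) (zc_le_zc_succ Y s)) hstep hZ0 hZ
  refine ⟨PRSet.of_primrec_zc hZ0 ?_, hXc.compl_of_zc_le fun s => ?_, congrFun hZ₀⟩
  · rw [hZ₀]; exact Primrec.nat_max.comp hX.primrec_zc hY.primrec_zc
  · rw [hZ₀]; exact le_max_left _ _

theorem stmt_7 (X Y Z₀ : Set ℕ) (hX : PRSet X) (hY : PRSet Y)
    (hXc : Xᶜ.Infinite) (hYc : Yᶜ.Infinite) (hX0 : 0 ∈ X) (hY0 : 0 ∈ Y)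
    (hZ0 : 0 ∈ Z₀)
    (hZ : ∀ s, (s + 1 ∉ Z₀ ↔
      max (zc X (s+1)) (zc Y (s+1)) > max (zc X s) (zc Y s))) :
    PRSet Z₀ ∧ Z₀ᶜ.Infinite ∧ ∀ s, zc Z₀ s = max (zc X s) (zc Y s) :=
  stmt_7_general X Y Z₀ hX hY hXc hX0 hY0 hZ0 hZ
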